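/- arXiv:1901.08842 — 2 statements merged into one kernel-verified Lean document; each statement's English description precedes it below -/
import Mathlib

section
/- For every r > 0 and every vector field v ∈ C¹ on the closure of Q⁺(r), one has ∫_{−r²}^0 ( ∫_{B⁺(r)} (|v(x,t)| |∇v(x,t)|)^{12/11} dx )^{11/8} dt ≤ ( sup_{−r²<t<0} ∫_{B⁺(r)} |v(x,t)|² dx )^{3/8} · ( ∫_{Q⁺(r)} |∇v|² dx dt )^{3/4} · ( ∫_{Q⁺(r)} |v|³ dx dt )^{1/4}. Equivalently, in scale-invariant form, ‖|v||∇v|‖_{12/11,3/2,Q⁺(r)}^{3/2} ≤ r^{13/8} A(v,r)^{3/8} E(v,r)^{3/4} C(v,r)^{1/4}. -/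
open MeasureTheory Real Set
open scoped ENNReal NNReal

noncomputable section

abbrev E3 := EuclideanSpace ℝ (Fin 3)

/-- The half ball `B⁺(r) = {x ∈ ℝ³ : |x| < r, x₃ > 0}`. -/
def halfBall (r : ℝ) : Set E3 := {x | ‖x‖ < r ∧ 0 < x 2}

/-- The parabolic half-cylinder `Q⁺(r) = B⁺(r) × (−r², 0)`. -/
def halfCyl (r : ℝ) : Set (E3 × ℝ) := (halfBall r) ×ˢ (Ioo (-r^2) 0)

/-- `A(v,r) = sup_{−r²<t<0} (1/r) ∫_{B⁺(r)} |v(x,t)|² dx`. -/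
def qtyA (v : E3 → ℝ → E3) (r : ℝ) : ℝ :=
  ⨆ t : Ioo (-r^2) (0:ℝ), (1/r) * ∫ x in halfBall r, ‖v x (t:ℝ)‖^2

/-- `E(v,r) = (1/r) ∫_{Q⁺(r)} |∇v|² dz`. -/
def qtyE (v : E3 → ℝ → E3) (r : ℝ) : ℝ :=
  (1/r) * ∫ t in Ioo (-r^2) (0:ℝ), ∫ x in halfBall r, ‖fderiv ℝ (fun y => v y t) x‖^2

/-- `C(v,r) = (1/r²) ∫_{Q⁺(r)} |v|³ dz`. -/
def qtyC (v : E3 → ℝ → E3) (r : ℝ) : ℝ :=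
  (1/r^2) * ∫ t in Ioo (-r^2) (0:ℝ), ∫ x in halfBall r, ‖v x t‖^3

/-- The mixed norm `‖f‖_{12/11,3/2,Q⁺(r)}`. -/
def mixedNorm (f : E3 → ℝ → ℝ) (r : ℝ) : ℝ :=
  (∫ t in Ioo (-r^2) (0:ℝ),
    (∫ x in halfBall r, |f x t| ^ ((12:ℝ)/11)) ^ ((11:ℝ)/8)) ^ ((2:ℝ)/3)

lemma aux_exists_measurable_eqOn {f : E3 × ℝ → ℝ} {s : Set (E3 × ℝ)} (hs : IsOpen s)
    (hf : ContinuousOn f s) : ∃ g : E3 × ℝ → ℝ, Measurable g ∧ EqOn f g s := by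
  classical
  refine ⟨s.piecewise f 0, ?_, fun z hz => (Set.piecewise_eq_of_mem s _ _ hz).symm⟩
  apply measurable_of_isOpen
  intro t ht
  obtain ⟨u, u_open, hu⟩ : ∃ u, IsOpen u ∧ f ⁻¹' t ∩ s = u ∩ s :=
    _root_.continuousOn_iff'.1 hf t ht
  rw [Set.piecewise_preimage, Set.ite, hu]
  exact (u_open.measurableSet.inter hs.measurableSet).union
    ((measurable_const ht.measurableSet).diff hs.measurableSet)

lemma aux_hoelder {α : Type*} [MeasurableSpace α] (μ : Measure α) (f g : α → ℝ≥0∞) {p q a b : ℝ}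
    (hp : 1 < p) (hpq : p⁻¹ + q⁻¹ = 1) (ha : a = 1/p) (hb : b = 1/q)
    (hf : AEMeasurable f μ) (hg : AEMeasurable g μ) :
    ∫⁻ x, f x * g x ∂μ ≤ (∫⁻ x, f x ^ p ∂μ) ^ a * (∫⁻ x, g x ^ q ∂μ) ^ b := by
  subst ha hb
  simpa [one_div] using ENNReal.lintegral_mul_le_Lp_mul_Lq μ (Real.holderConjugate_iff.mpr ⟨hp, hpq⟩) hf hg

lemma aux_conv {B : Set E3} (hBm : MeasurableSet B) (hBfin : volume B ≠ ⊤)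
    {φ : E3 → ℝ} (hc : ContinuousOn φ B) (hnn : ∀ x ∈ B, 0 ≤ φ x)
    {c : ℝ} (hbd : ∀ x ∈ B, φ x ≤ c) {p : ℝ} (hp : 0 < p) :
    IntegrableOn (fun x => φ x ^ p) B ∧
    ENNReal.ofReal (∫ x in B, φ x ^ p) = ∫⁻ x in B, (ENNReal.ofReal (φ x)) ^ p := by
  have hφp : ContinuousOn (fun x => φ x ^ p) B := hc.rpow_const (fun x hx => Or.inr hp.le)
  have hme : AEStronglyMeasurable (fun x => φ x ^ p) (volume.restrict B) :=
    hφp.aestronglyMeasurable hBm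
  have hint : IntegrableOn (fun x => φ x ^ p) B := by
    refine Integrable.mono' (g := fun _ => c ^ p)
      (integrableOn_const hBfin) hme ?_
    filter_upwards [ae_restrict_mem hBm] with x hx
    rw [Real.norm_eq_abs, abs_of_nonneg (Real.rpow_nonneg (hnn x hx) p)]
    exact Real.rpow_le_rpow (hnn x hx) (hbd x hx) hp.le
  refine ⟨hint, ?_⟩
  rw [ofReal_integral_eq_lintegral_ofReal hint ?_]
  · refine lintegral_congr_ae ?_
    filter_upwards [ae_restrict_mem hBm] with x hx
    exact (ENNReal.ofReal_rpow_of_nonneg (hnn x hx) hp.le).symm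
  · filter_upwards [ae_restrict_mem hBm] with x hx
    exact Real.rpow_nonneg (hnn x hx) p

set_option maxHeartbeats 2000000 in
/-- the main estimate of the convective term:
`‖|v||∇v|‖_{12/11,3/2,Q⁺(r)}^{3/2} ≤ r^{13/8} A(v,r)^{3/8} E(v,r)^{3/4} C(v,r)^{1/4}`. -/
theorem convective_term_estimate
    (r : ℝ) (hr : 0 < r) (v : E3 → ℝ → E3)
    (hv : ContDiffOn ℝ 1 (fun p : E3 × ℝ => v p.1 p.2) (closure (halfCyl r))) :
    mixedNorm (fun x t => ‖v x t‖ * ‖fderiv ℝ (fun y => v y t) x‖) r ^ ((3:ℝ)/2)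
      ≤ r ^ ((13:ℝ)/8) * qtyA v r ^ ((3:ℝ)/8) * qtyE v r ^ ((3:ℝ)/4)
        * qtyC v r ^ ((1:ℝ)/4) := by
  classical
  set V : E3 × ℝ → E3 := fun p => v p.1 p.2 with hVdef
  set K : Set (E3 × ℝ) := closure (halfCyl r) with hKdef
  set ι : E3 →L[ℝ] E3 × ℝ := (ContinuousLinearMap.id ℝ E3).prod (0 : E3 →L[ℝ] ℝ) with hιdef
  have hιapp : ∀ y : E3, ι y = (y, 0) := fun y => rfl
  set B : Set E3 := halfBall r with hBdef
  set T : Set ℝ := Ioo (-r^2) (0:ℝ) with hTdef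
  have hTmeas : MeasurableSet T := measurableSet_Ioo
  -- topology
  have hBopen : IsOpen B := by
    have h1 : IsOpen {x : E3 | ‖x‖ < r} := isOpen_lt continuous_norm continuous_const
    have h2 : IsOpen {x : E3 | 0 < x 2} :=
      isOpen_lt continuous_const (EuclideanSpace.proj (2 : Fin 3)).continuous
    exact h1.inter h2
  have hBmeas : MeasurableSet B := hBopen.measurableSet
  have hQopen : IsOpen (halfCyl r) := hBopen.prod isOpen_Ioo
  have hQK : halfCyl r ⊆ K := subset_closure
  have hBbdd : Bornology.IsBounded B :=
    (Metric.isBounded_ball (x := (0:E3)) (r := r)).subset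
      (fun x hx => by simpa [Metric.mem_ball, dist_zero_right] using hx.1)
  have hQbdd : Bornology.IsBounded (halfCyl r) := hBbdd.prod (Metric.isBounded_Ioo _ _)
  have hKcomp : IsCompact K := Metric.isCompact_of_isClosed_isBounded isClosed_closure hQbdd.closure
  have hBfin : volume B ≠ ⊤ := hBbdd.measure_lt_top.ne
  have hTfin : volume T ≠ ⊤ := by rw [hTdef, Real.volume_Ioo]; exact ENNReal.ofReal_ne_top
  have hQconv : Convex ℝ (halfCyl r) := by
    have h1 : Convex ℝ {x : E3 | ‖x‖ < r} := by
      have := convex_ball (0 : E3) r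
      simpa [Metric.ball, dist_zero_right] using this
    have h2 : Convex ℝ {x : E3 | 0 < x 2} :=
      convex_halfSpace_gt (IsLinearMap.mk (fun a b => by simp) (fun c a => by simp)) 0
    exact (h1.inter h2).prod (convex_Ioo _ _)
  have hp0 : (EuclideanSpace.single (2 : Fin 3) (r/2), -r^2/2) ∈ halfCyl r := by
    refine ⟨⟨?_, ?_⟩, ?_, ?_⟩
    · rw [EuclideanSpace.norm_single]; rw [Real.norm_eq_abs, abs_of_pos (by linarith)]; linarith
    · show (0:ℝ) < EuclideanSpace.single (2 : Fin 3) (r/2) 2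
      rw [EuclideanSpace.single_apply]; simp; linarith
    · nlinarith
    · nlinarith
  have hKud : UniqueDiffOn ℝ K := by
    refine uniqueDiffOn_convex hQconv.closure
      ⟨(EuclideanSpace.single (2 : Fin 3) (r/2), -r^2/2), ?_⟩
    exact (hQopen.subset_interior_iff.2 hQK) hp0
  -- derivative machinery
  set W : E3 × ℝ → (E3 × ℝ →L[ℝ] E3) := fderivWithin ℝ V K with hWdef
  have hWcont : ContinuousOn W K := hv.continuousOn_fderivWithin hKud le_rfl
  obtain ⟨M1, hM1⟩ := hKcomp.exists_bound_of_continuousOn hv.continuousOn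
  obtain ⟨M2, hM2⟩ := hKcomp.exists_bound_of_continuousOn hWcont
  have hM1n : 0 ≤ M1 := le_trans (norm_nonneg _) (hM1 _ (hQK hp0))
  have hM2n : 0 ≤ M2 := le_trans (norm_nonneg _) (hM2 _ (hQK hp0))
  have hderiv : ∀ z ∈ halfCyl r, HasFDerivAt V (W z) z := by
    intro z hz
    have hKz : K ∈ nhds z := Filter.mem_of_superset (hQopen.mem_nhds hz) hQK
    have hdw : DifferentiableWithinAt ℝ V K z := (hv.differentiableOn one_ne_zero) z (hQK hz)
    have hda : DifferentiableAt ℝ V z := hdw.differentiableAt hKz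
    have heq : fderivWithin ℝ V K z = fderiv ℝ V z := fderivWithin_of_mem_nhds hKz
    rw [hWdef, heq]
    exact hda.hasFDerivAt
  have hslice : ∀ t : ℝ, ∀ x : E3, (x, t) ∈ halfCyl r →
      fderiv ℝ (fun y => v y t) x = (W (x, t)).comp ι := by
    intro t x hxt
    have hmap : HasFDerivAt (fun y : E3 => (y, t)) ι x :=
      (hasFDerivAt_id x).prodMk (hasFDerivAt_const t x)
    exact ((hderiv _ hxt).comp x hmap).fderiv
  have hιnorm : ∀ (A : E3 × ℝ →L[ℝ] E3), ‖A.comp ι‖ ≤ ‖A‖ := by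
    intro A
    refine ContinuousLinearMap.opNorm_le_bound _ (norm_nonneg A) (fun y => ?_)
    calc ‖A (ι y)‖ ≤ ‖A‖ * ‖ι y‖ := A.le_opNorm _
    _ ≤ ‖A‖ * ‖y‖ := by
        refine mul_le_mul_of_nonneg_left ?_ (norm_nonneg A)
        rw [hιapp]
        simp [Prod.norm_def]
  -- globally measurable substitutes
  obtain ⟨N, hNmeas, hNeq⟩ := aux_exists_measurable_eqOn hQopen
    ((hv.continuousOn.mono hQK).norm)
  set D : E3 × ℝ → ℝ := fun z => ‖(fderiv ℝ V z).comp ι‖ with hDdef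
  have hDmeas : Measurable D := by
    have hc : Continuous (fun A : E3 × ℝ →L[ℝ] E3 => A.comp ι) :=
      ((ContinuousLinearMap.compL ℝ E3 (E3 × ℝ) E3).flip ι).continuous
    exact measurable_norm.comp (hc.measurable.comp (measurable_fderiv ℝ V))
  set Φ : E3 × ℝ → ℝ≥0∞ := fun z => ENNReal.ofReal (N z) with hΦdef
  set Γ : E3 × ℝ → ℝ≥0∞ := fun z => ENNReal.ofReal (D z) with hΓdef
  have hΦmeas : Measurable Φ := ENNReal.measurable_ofReal.comp hNmeas
  have hΓmeas : Measurable Γ := ENNReal.measurable_ofReal.comp hDmeas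
  have hmem : ∀ t ∈ T, ∀ x ∈ B, ((x, t) : E3 × ℝ) ∈ halfCyl r := by
    intro t ht x hx
    exact ⟨hx, ht⟩
  -- pointwise identifications on the half cylinder
  have hΦeq : ∀ t ∈ T, ∀ x ∈ B, ENNReal.ofReal ‖v x t‖ = Φ (x, t) := by
    intro t ht x hx
    have h1 : ‖V (x, t)‖ = N (x, t) := hNeq (hmem t ht x hx)
    have h2 : ‖v x t‖ = ‖V (x, t)‖ := rfl
    have h3 : Φ (x, t) = ENNReal.ofReal (N (x, t)) := rfl
    rw [h2, h3]
    exact congrArg ENNReal.ofReal h1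
  have hgW : ∀ t ∈ T, ∀ x ∈ B, ‖fderiv ℝ (fun y => v y t) x‖ = D (x, t) := by
    intro t ht x hx
    rw [hslice t x (hmem t ht x hx), hDdef]
    simp only
    rw [((hderiv _ (hmem t ht x hx)).fderiv : fderiv ℝ V (x, t) = W (x, t))]
  have hΓeq : ∀ t ∈ T, ∀ x ∈ B, ENNReal.ofReal ‖fderiv ℝ (fun y => v y t) x‖ = Γ (x, t) := by
    intro t ht x hx
    have h3 : Γ (x, t) = ENNReal.ofReal (D (x, t)) := rfl
    rw [h3]
    exact congrArg ENNReal.ofReal (hgW t ht x hx)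
  -- bounds
  have hfb : ∀ t ∈ T, ∀ x ∈ B, ‖v x t‖ ≤ M1 := fun t ht x hx => hM1 (x, t) (hQK (hmem t ht x hx))
  have hgb : ∀ t ∈ T, ∀ x ∈ B, ‖fderiv ℝ (fun y => v y t) x‖ ≤ M2 := by
    intro t ht x hx
    rw [hslice t x (hmem t ht x hx)]
    exact (hιnorm _).trans (hM2 _ (hQK (hmem t ht x hx)))
  -- continuity in x for fixed t
  have hcontf : ∀ t ∈ T, ContinuousOn (fun x => ‖v x t‖) B := by
    intro t ht
    have h1 : ContinuousOn ((fun z => ‖V z‖) ∘ (fun x : E3 => (x, t))) B :=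
      ((hv.continuousOn.mono hQK).norm).comp
        ((continuous_id.prodMk continuous_const).continuousOn) (fun x hx => hmem t ht x hx)
    exact h1
  have hcontg : ∀ t ∈ T, ContinuousOn (fun x => ‖fderiv ℝ (fun y => v y t) x‖) B := by
    intro t ht
    have hc : Continuous (fun A : E3 × ℝ →L[ℝ] E3 => ‖A.comp ι‖) :=
      continuous_norm.comp ((ContinuousLinearMap.compL ℝ E3 (E3 × ℝ) E3).flip ι).continuous
    have h0 : ContinuousOn (W ∘ (fun x : E3 => (x, t))) B :=
      hWcont.comp ((continuous_id.prodMk continuous_const).continuousOn)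
        (fun x hx => hQK (hmem t ht x hx))
    have h1 : ContinuousOn ((fun A : E3 × ℝ →L[ℝ] E3 => ‖A.comp ι‖) ∘
        (W ∘ (fun x : E3 => (x, t)))) B := hc.comp_continuousOn h0
    refine h1.congr (fun x hx => ?_)
    show ‖fderiv ℝ (fun y => v y t) x‖ = _
    rw [hslice t x (hmem t ht x hx)]
    rfl
  -- ENNReal-valued slice integrals
  set F2 : ℝ → ℝ≥0∞ := fun t => ∫⁻ x in B, Φ (x, t) ^ (2:ℝ) with hF2def
  set F3 : ℝ → ℝ≥0∞ := fun t => ∫⁻ x in B, Φ (x, t) ^ (3:ℝ) with hF3def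
  set G2 : ℝ → ℝ≥0∞ := fun t => ∫⁻ x in B, Γ (x, t) ^ (2:ℝ) with hG2def
  set J : ℝ → ℝ≥0∞ := fun t => ∫⁻ x in B, (Φ (x, t) * Γ (x, t)) ^ ((12:ℝ)/11) with hJdef
  have hF3meas : Measurable F3 := (hΦmeas.pow measurable_const).lintegral_prod_left'
  have hG2meas : Measurable G2 := (hΓmeas.pow measurable_const).lintegral_prod_left'
  have hJmeas : Measurable J := ((hΦmeas.mul hΓmeas).pow measurable_const).lintegral_prod_left'
  -- real ↔ ENNReal conversions; nat pow bridges
  have hb2 : ∀ y : ℝ, y ^ (2:ℕ) = y ^ ((2:ℝ)) := fun y => by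
    rw [← Real.rpow_natCast y 2]; norm_num
  have hb3 : ∀ y : ℝ, y ^ (3:ℕ) = y ^ ((3:ℝ)) := fun y => by
    rw [← Real.rpow_natCast y 3]; norm_num
  have hP2 : ∀ t ∈ T, ENNReal.ofReal (∫ x in B, ‖v x t‖^2) = F2 t ∧
      IntegrableOn (fun x => ‖v x t‖^2) B := by
    intro t ht
    have hfun : (fun x : E3 => ‖v x t‖^2) = (fun x => ‖v x t‖ ^ ((2:ℝ))) :=
      funext fun x => hb2 _
    have hca := aux_conv hBmeas hBfin (hcontf t ht) (fun x _ => norm_nonneg _)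
      (hfb t ht) (by norm_num : (0:ℝ) < 2)
    constructor
    · rw [hfun, hca.2]
      exact setLIntegral_congr_fun hBmeas (fun x hx => by rw [hΦeq t ht x hx])
    · rw [hfun]; exact hca.1
  have hP3 : ∀ t ∈ T, ENNReal.ofReal (∫ x in B, ‖v x t‖^3) = F3 t := by
    intro t ht
    have hfun : (fun x : E3 => ‖v x t‖^3) = (fun x => ‖v x t‖ ^ ((3:ℝ))) :=
      funext fun x => hb3 _
    have hca := aux_conv hBmeas hBfin (hcontf t ht) (fun x _ => norm_nonneg _)
      (hfb t ht) (by norm_num : (0:ℝ) < 3)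
    rw [hfun, hca.2]
    exact setLIntegral_congr_fun hBmeas (fun x hx => by rw [hΦeq t ht x hx])
  have hPG : ∀ t ∈ T, ENNReal.ofReal (∫ x in B, ‖fderiv ℝ (fun y => v y t) x‖^2) = G2 t := by
    intro t ht
    have hfun : (fun x : E3 => ‖fderiv ℝ (fun y => v y t) x‖^2)
        = (fun x => ‖fderiv ℝ (fun y => v y t) x‖ ^ ((2:ℝ))) := funext fun x => hb2 _
    have hca := aux_conv hBmeas hBfin (hcontg t ht) (fun x _ => norm_nonneg _)
      (hgb t ht) (by norm_num : (0:ℝ) < 2)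
    rw [hfun, hca.2]
    exact setLIntegral_congr_fun hBmeas (fun x hx => by rw [hΓeq t ht x hx])
  have hPJ : ∀ t ∈ T, ENNReal.ofReal (∫ x in B,
      |‖v x t‖ * ‖fderiv ℝ (fun y => v y t) x‖| ^ ((12:ℝ)/11)) = J t := by
    intro t ht
    have hca := aux_conv (φ := fun x => |‖v x t‖ * ‖fderiv ℝ (fun y => v y t) x‖|) hBmeas hBfin (((hcontf t ht).mul (hcontg t ht)).abs)
      (fun x _ => abs_nonneg _)
      (fun x hx => by
        show |‖v x t‖ * ‖fderiv ℝ (fun y => v y t) x‖| ≤ _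
        rw [abs_of_nonneg (mul_nonneg (norm_nonneg _) (norm_nonneg _))]
        exact mul_le_mul (hfb t ht x hx) (hgb t ht x hx) (norm_nonneg _) hM1n)
      (by norm_num : (0:ℝ) < 12/11)
    rw [hca.2]
    refine setLIntegral_congr_fun hBmeas (fun x hx => ?_)
    rw [abs_of_nonneg (mul_nonneg (norm_nonneg _) (norm_nonneg _)),
      ENNReal.ofReal_mul (norm_nonneg _), hΦeq t ht x hx, hΓeq t ht x hx]
  -- bound for qtyA
  have hIb : ∀ (t : ℝ), t ∈ T → ∫ x in B, ‖v x t‖^2 ≤ M1^2 * (volume B).toReal := by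
    intro t ht
    have h1 : ∫ x in B, ‖v x t‖^2 ≤ ∫ _x in B, M1^2 := by
      refine setIntegral_mono_on (hP2 t ht).2 (integrableOn_const hBfin)
        hBmeas (fun x hx => ?_)
      exact pow_le_pow_left₀ (norm_nonneg _) (hfb t ht x hx) 2
    rw [setIntegral_const, smul_eq_mul, mul_comm] at h1
    exact h1
  have hbddA : BddAbove (Set.range fun s : ↥(Ioo (-r^2) (0:ℝ)) =>
      (1/r) * ∫ x in halfBall r, ‖v x (s:ℝ)‖^2) := by
    refine ⟨(1/r) * (M1^2 * (volume B).toReal), forall_mem_range.2 fun s => ?_⟩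
    exact mul_le_mul_of_nonneg_left (hIb s s.2) (by positivity)
  have hA_nn : 0 ≤ qtyA v r := by
    refine Real.iSup_nonneg fun s => ?_
    exact mul_nonneg (by positivity) (setIntegral_nonneg hBmeas fun x _ => by positivity)
  have hAt : ∀ t ∈ T, ∫ x in B, ‖v x t‖^2 ≤ r * qtyA v r := by
    intro t ht
    have h1 : (1/r) * ∫ x in B, ‖v x t‖^2 ≤ qtyA v r := le_ciSup hbddA ⟨t, ht⟩
    have h2 := mul_le_mul_of_nonneg_left h1 hr.le
    rw [← mul_assoc, mul_one_div, div_self hr.ne', one_mul] at h2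
    exact h2
  -- finiteness bounds
  have lbound : ∀ (h : E3 → ℝ≥0∞) (cc : ℝ≥0∞), (∀ x ∈ B, h x ≤ cc) →
      ∫⁻ x in B, h x ≤ cc * volume B := by
    intro h cc hc
    calc ∫⁻ x in B, h x ≤ ∫⁻ _x in B, cc :=
          lintegral_mono_ae ((ae_restrict_iff' hBmeas).2 (ae_of_all _ hc))
    _ = cc * volume B := setLIntegral_const B cc
  have lboundT : ∀ (h : ℝ → ℝ≥0∞) (cc : ℝ≥0∞), (∀ t ∈ T, h t ≤ cc) →
      ∫⁻ t in T, h t ≤ cc * volume T := by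
    intro h cc hc
    calc ∫⁻ t in T, h t ≤ ∫⁻ _t in T, cc :=
          lintegral_mono_ae ((ae_restrict_iff' hTmeas).2 (ae_of_all _ hc))
    _ = cc * volume T := setLIntegral_const T cc
  have hΦbd : ∀ t ∈ T, ∀ x ∈ B, Φ (x, t) ≤ ENNReal.ofReal M1 := by
    intro t ht x hx
    rw [← hΦeq t ht x hx]
    exact ENNReal.ofReal_le_ofReal (hfb t ht x hx)
  have hΓbd : ∀ t ∈ T, ∀ x ∈ B, Γ (x, t) ≤ ENNReal.ofReal M2 := by
    intro t ht x hx
    rw [← hΓeq t ht x hx]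
    exact ENNReal.ofReal_le_ofReal (hgb t ht x hx)
  have hF3bd : ∀ t ∈ T, F3 t ≤ ENNReal.ofReal M1 ^ (3:ℝ) * volume B := fun t ht =>
    lbound _ _ (fun x hx => ENNReal.rpow_le_rpow (hΦbd t ht x hx) (by norm_num))
  have hG2bd : ∀ t ∈ T, G2 t ≤ ENNReal.ofReal M2 ^ (2:ℝ) * volume B := fun t ht =>
    lbound _ _ (fun x hx => ENNReal.rpow_le_rpow (hΓbd t ht x hx) (by norm_num))
  have hJbd : ∀ t ∈ T, J t ≤ (ENNReal.ofReal M1 * ENNReal.ofReal M2) ^ ((12:ℝ)/11) * volume B := by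
    intro t ht
    refine lbound _ _ (fun x hx => ENNReal.rpow_le_rpow ?_ (by norm_num))
    exact mul_le_mul' (hΦbd t ht x hx) (hΓbd t ht x hx)
  set E2 : ℝ≥0∞ := ∫⁻ t in T, G2 t with hE2def
  set C3 : ℝ≥0∞ := ∫⁻ t in T, F3 t with hC3def
  have hE2fin : E2 ≠ ⊤ := by
    refine ne_top_of_le_ne_top ?_ (lboundT _ _ hG2bd)
    exact ENNReal.mul_ne_top (ENNReal.mul_ne_top
      (ENNReal.rpow_ne_top_of_nonneg (by norm_num) ENNReal.ofReal_ne_top) hBfin) hTfin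
  have hC3fin : C3 ≠ ⊤ := by
    refine ne_top_of_le_ne_top ?_ (lboundT _ _ hF3bd)
    exact ENNReal.mul_ne_top (ENNReal.mul_ne_top
      (ENNReal.rpow_ne_top_of_nonneg (by norm_num) ENNReal.ofReal_ne_top) hBfin) hTfin
  -- per-slice Hoelder estimate
  have step1 : ∀ t ∈ T, J t ^ ((11:ℝ)/8) ≤ ENNReal.ofReal (r * qtyA v r) ^ ((3:ℝ)/8) *
      (F3 t ^ ((1:ℝ)/4) * G2 t ^ ((3:ℝ)/4)) := by
    intro t ht
    have hΦx : AEMeasurable (fun x => Φ (x, t)) (volume.restrict B) :=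
      (hΦmeas.comp (measurable_id.prodMk measurable_const)).aemeasurable
    have hΓx : AEMeasurable (fun x => Γ (x, t)) (volume.restrict B) :=
      (hΓmeas.comp (measurable_id.prodMk measurable_const)).aemeasurable
    have h1 : J t ≤ (∫⁻ x in B, Φ (x, t) ^ ((12:ℝ)/5)) ^ ((5:ℝ)/11) * G2 t ^ ((6:ℝ)/11) := by
      have h0 : J t = ∫⁻ x in B, (Φ (x, t) ^ ((12:ℝ)/11)) * (Γ (x, t) ^ ((12:ℝ)/11)) :=
        lintegral_congr fun x => ENNReal.mul_rpow_of_nonneg _ _ (by norm_num)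
      have h2 := aux_hoelder (volume.restrict B)
        (fun x => Φ (x, t) ^ ((12:ℝ)/11)) (fun x => Γ (x, t) ^ ((12:ℝ)/11))
        (p := 11/5) (q := 11/6) (a := (5:ℝ)/11) (b := (6:ℝ)/11)
        (by norm_num) (by norm_num) (by norm_num) (by norm_num)
        (hΦx.pow_const _) (hΓx.pow_const _)
      rw [h0]
      refine h2.trans (le_of_eq ?_)
      have e1 : (∫⁻ x in B, (Φ (x, t) ^ ((12:ℝ)/11)) ^ ((11:ℝ)/5))
          = ∫⁻ x in B, Φ (x, t) ^ ((12:ℝ)/5) :=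
        lintegral_congr fun x => by rw [← ENNReal.rpow_mul]; norm_num
      have e2 : (∫⁻ x in B, (Γ (x, t) ^ ((12:ℝ)/11)) ^ ((11:ℝ)/6)) = G2 t :=
        lintegral_congr fun x => by rw [← ENNReal.rpow_mul]; norm_num
      rw [show ((11:ℝ)/5) = (11/5 : ℝ) by norm_num] at e1
      rw [show ((11:ℝ)/6) = (11/6 : ℝ) by norm_num] at e2
      rw [e1, e2]
    have h3 : (∫⁻ x in B, Φ (x, t) ^ ((12:ℝ)/5)) ≤ F2 t ^ ((3:ℝ)/5) * F3 t ^ ((2:ℝ)/5) := by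
      have h0 : (∫⁻ x in B, Φ (x, t) ^ ((12:ℝ)/5))
          = ∫⁻ x in B, (Φ (x, t) ^ ((6:ℝ)/5)) * (Φ (x, t) ^ ((6:ℝ)/5)) :=
        lintegral_congr fun x => by
          rw [← ENNReal.rpow_add_of_nonneg (x := Φ (x, t)) ((6:ℝ)/5) ((6:ℝ)/5)
            (by norm_num) (by norm_num)]
          norm_num
      have h2 := aux_hoelder (volume.restrict B)
        (fun x => Φ (x, t) ^ ((6:ℝ)/5)) (fun x => Φ (x, t) ^ ((6:ℝ)/5))
        (p := 5/3) (q := 5/2) (a := (3:ℝ)/5) (b := (2:ℝ)/5)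
        (by norm_num) (by norm_num) (by norm_num) (by norm_num)
        (hΦx.pow_const _) (hΦx.pow_const _)
      rw [h0]
      refine h2.trans (le_of_eq ?_)
      have e1 : (∫⁻ x in B, (Φ (x, t) ^ ((6:ℝ)/5)) ^ ((5:ℝ)/3)) = F2 t :=
        lintegral_congr fun x => by rw [← ENNReal.rpow_mul]; norm_num
      have e2 : (∫⁻ x in B, (Φ (x, t) ^ ((6:ℝ)/5)) ^ ((5:ℝ)/2)) = F3 t :=
        lintegral_congr fun x => by rw [← ENNReal.rpow_mul]; norm_num
      rw [show ((5:ℝ)/3) = (5/3 : ℝ) by norm_num] at e1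
      rw [show ((5:ℝ)/2) = (5/2 : ℝ) by norm_num] at e2
      rw [e1, e2]
    have h4 : J t ≤ F2 t ^ ((3:ℝ)/11) * F3 t ^ ((2:ℝ)/11) * G2 t ^ ((6:ℝ)/11) := by
      refine h1.trans ?_
      have h5 := ENNReal.rpow_le_rpow h3 (by norm_num : (0:ℝ) ≤ 5/11)
      refine (mul_le_mul_left h5 _).trans (le_of_eq ?_)
      rw [ENNReal.mul_rpow_of_nonneg _ _ (by norm_num : (0:ℝ) ≤ 5/11),
        ← ENNReal.rpow_mul, ← ENNReal.rpow_mul]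
      norm_num
    have h6 : F2 t ≤ ENNReal.ofReal (r * qtyA v r) := by
      rw [← (hP2 t ht).1]
      exact ENNReal.ofReal_le_ofReal (hAt t ht)
    have h7 : J t ^ ((11:ℝ)/8) ≤ (F2 t ^ ((3:ℝ)/11) * F3 t ^ ((2:ℝ)/11) *
        G2 t ^ ((6:ℝ)/11)) ^ ((11:ℝ)/8) := ENNReal.rpow_le_rpow h4 (by norm_num)
    refine h7.trans ?_
    have h8 : (F2 t ^ ((3:ℝ)/11) * F3 t ^ ((2:ℝ)/11) * G2 t ^ ((6:ℝ)/11)) ^ ((11:ℝ)/8)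
        = F2 t ^ ((3:ℝ)/8) * (F3 t ^ ((1:ℝ)/4) * G2 t ^ ((3:ℝ)/4)) := by
      rw [ENNReal.mul_rpow_of_nonneg _ _ (by norm_num : (0:ℝ) ≤ 11/8),
        ENNReal.mul_rpow_of_nonneg _ _ (by norm_num : (0:ℝ) ≤ 11/8),
        ← ENNReal.rpow_mul, ← ENNReal.rpow_mul, ← ENNReal.rpow_mul]
      norm_num
      ring
    rw [h8]
    exact mul_le_mul_left (ENNReal.rpow_le_rpow h6 (by norm_num)) _
  -- integrate in time
  have step2 : ∫⁻ t in T, J t ^ ((11:ℝ)/8) ≤ ENNReal.ofReal (r * qtyA v r) ^ ((3:ℝ)/8) *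
      (C3 ^ ((1:ℝ)/4) * E2 ^ ((3:ℝ)/4)) := by
    have hstep : ∫⁻ t in T, J t ^ ((11:ℝ)/8) ≤ ∫⁻ t in T,
        ENNReal.ofReal (r * qtyA v r) ^ ((3:ℝ)/8) * (F3 t ^ ((1:ℝ)/4) * G2 t ^ ((3:ℝ)/4)) :=
      lintegral_mono_ae ((ae_restrict_iff' hTmeas).2 (ae_of_all _ step1))
    refine hstep.trans ?_
    rw [lintegral_const_mul' _ _ (ENNReal.rpow_ne_top_of_nonneg (by norm_num)
      ENNReal.ofReal_ne_top)]
    refine mul_le_mul_right ?_ _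
    have hH := aux_hoelder (volume.restrict T)
      (fun t => F3 t ^ ((1:ℝ)/4)) (fun t => G2 t ^ ((3:ℝ)/4))
      (p := 4) (q := 4/3) (a := (1:ℝ)/4) (b := (3:ℝ)/4)
      (by norm_num) (by norm_num) (by norm_num) (by norm_num)
      ((hF3meas.pow measurable_const).aemeasurable)
      ((hG2meas.pow measurable_const).aemeasurable)
    refine hH.trans (le_of_eq ?_)
    have e1 : (∫⁻ t in T, (F3 t ^ ((1:ℝ)/4)) ^ (4:ℝ)) = C3 :=
      lintegral_congr fun t => by rw [← ENNReal.rpow_mul]; norm_num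
    have e2 : (∫⁻ t in T, (G2 t ^ ((3:ℝ)/4)) ^ ((4:ℝ)/3)) = E2 :=
      lintegral_congr fun t => by rw [← ENNReal.rpow_mul]; norm_num
    rw [show ((4:ℝ)/3) = (4/3 : ℝ) by norm_num] at e2
    rw [e1, e2]
  -- real conversions for qtyE, qtyC and the LHS
  have hg2real : ∀ t ∈ T, (∫ x in B, ‖fderiv ℝ (fun y => v y t) x‖^2) = (G2 t).toReal := by
    intro t ht
    rw [← hPG t ht, ENNReal.toReal_ofReal
      (setIntegral_nonneg hBmeas fun x _ => by positivity)]
  have hf3real : ∀ t ∈ T, (∫ x in B, ‖v x t‖^3) = (F3 t).toReal := by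
    intro t ht
    rw [← hP3 t ht, ENNReal.toReal_ofReal
      (setIntegral_nonneg hBmeas fun x _ => by positivity)]
  have he : (∫ t in T, ∫ x in B, ‖fderiv ℝ (fun y => v y t) x‖^2) = E2.toReal := by
    rw [← integral_toReal hG2meas.aemeasurable ((ae_restrict_iff' hTmeas).2
      (ae_of_all _ fun t ht => lt_of_le_of_lt (hG2bd t ht) (lt_top_iff_ne_top.2
        (ENNReal.mul_ne_top (ENNReal.rpow_ne_top_of_nonneg (by norm_num)
          ENNReal.ofReal_ne_top) hBfin))))]
    exact setIntegral_congr_ae hTmeas (ae_of_all _ fun t ht => hg2real t ht)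
  have hc : (∫ t in T, ∫ x in B, ‖v x t‖^3) = C3.toReal := by
    rw [← integral_toReal hF3meas.aemeasurable ((ae_restrict_iff' hTmeas).2
      (ae_of_all _ fun t ht => lt_of_le_of_lt (hF3bd t ht) (lt_top_iff_ne_top.2
        (ENNReal.mul_ne_top (ENNReal.rpow_ne_top_of_nonneg (by norm_num)
          ENNReal.ofReal_ne_top) hBfin))))]
    exact setIntegral_congr_ae hTmeas (ae_of_all _ fun t ht => hf3real t ht)
  have hLt : ∀ t ∈ T, (∫ x in B,
      |‖v x t‖ * ‖fderiv ℝ (fun y => v y t) x‖| ^ ((12:ℝ)/11)) = (J t).toReal := by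
    intro t ht
    rw [← hPJ t ht, ENNReal.toReal_ofReal (setIntegral_nonneg hBmeas fun x _ =>
      Real.rpow_nonneg (abs_nonneg _) _)]
  have hLT : (∫ t in T, (∫ x in B,
      |‖v x t‖ * ‖fderiv ℝ (fun y => v y t) x‖| ^ ((12:ℝ)/11)) ^ ((11:ℝ)/8))
      = (∫⁻ t in T, J t ^ ((11:ℝ)/8)).toReal := by
    rw [← integral_toReal ((hJmeas.pow measurable_const).aemeasurable)
      ((ae_restrict_iff' hTmeas).2 (ae_of_all _ fun t ht => ?_))]
    · refine setIntegral_congr_ae hTmeas (ae_of_all _ fun t ht => ?_)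
      rw [hLt t ht, ENNReal.toReal_rpow]
    · refine lt_top_iff_ne_top.2 (ENNReal.rpow_ne_top_of_nonneg (by norm_num) ?_)
      exact ne_top_of_le_ne_top (ENNReal.mul_ne_top
        (ENNReal.rpow_ne_top_of_nonneg (by norm_num) (ENNReal.mul_ne_top
          ENNReal.ofReal_ne_top ENNReal.ofReal_ne_top)) hBfin) (hJbd t ht)
  -- finish
  have hRHSfin : ENNReal.ofReal (r * qtyA v r) ^ ((3:ℝ)/8) *
      (C3 ^ ((1:ℝ)/4) * E2 ^ ((3:ℝ)/4)) ≠ ⊤ :=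
    ENNReal.mul_ne_top (ENNReal.rpow_ne_top_of_nonneg (by norm_num) ENNReal.ofReal_ne_top)
      (ENNReal.mul_ne_top (ENNReal.rpow_ne_top_of_nonneg (by norm_num) hC3fin)
        (ENNReal.rpow_ne_top_of_nonneg (by norm_num) hE2fin))
  have hqE : qtyE v r = (1/r) * E2.toReal := by rw [← he]; rfl
  have hqC : qtyC v r = (1/r^2) * C3.toReal := by rw [← hc]; rfl
  have hE2val : E2.toReal = r * qtyE v r := by rw [hqE]; field_simp
  have hC3val : C3.toReal = r^2 * qtyC v r := by rw [hqC]; field_simp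
  have hE_nn : 0 ≤ qtyE v r := by
    rw [hqE]
    positivity
  have hC_nn : 0 ≤ qtyC v r := by
    rw [hqC]
    positivity
  -- LHS reduction
  have hLTnn : 0 ≤ ∫ t in T, (∫ x in B,
      |‖v x t‖ * ‖fderiv ℝ (fun y => v y t) x‖| ^ ((12:ℝ)/11)) ^ ((11:ℝ)/8) :=
    setIntegral_nonneg hTmeas fun t ht => Real.rpow_nonneg
      (setIntegral_nonneg hBmeas fun x _ => Real.rpow_nonneg (abs_nonneg _) _) _
  have hgoalL : mixedNorm (fun x t => ‖v x t‖ * ‖fderiv ℝ (fun y => v y t) x‖) r ^ ((3:ℝ)/2)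
      = ∫ t in T, (∫ x in B,
        |‖v x t‖ * ‖fderiv ℝ (fun y => v y t) x‖| ^ ((12:ℝ)/11)) ^ ((11:ℝ)/8) := by
    rw [mixedNorm]
    rw [← Real.rpow_mul hLTnn]
    norm_num
  rw [hgoalL, hLT]
  calc (∫⁻ t in T, J t ^ ((11:ℝ)/8)).toReal
      ≤ (ENNReal.ofReal (r * qtyA v r) ^ ((3:ℝ)/8) *
        (C3 ^ ((1:ℝ)/4) * E2 ^ ((3:ℝ)/4))).toReal := ENNReal.toReal_mono hRHSfin step2
    _ = (r * qtyA v r) ^ ((3:ℝ)/8) * (C3.toReal ^ ((1:ℝ)/4) * E2.toReal ^ ((3:ℝ)/4)) := by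
        rw [ENNReal.toReal_mul, ENNReal.toReal_mul, ← ENNReal.toReal_rpow,
          ← ENNReal.toReal_rpow, ← ENNReal.toReal_rpow,
          ENNReal.toReal_ofReal (mul_nonneg hr.le hA_nn)]
    _ = r ^ ((13:ℝ)/8) * qtyA v r ^ ((3:ℝ)/8) * qtyE v r ^ ((3:ℝ)/4)
        * qtyC v r ^ ((1:ℝ)/4) := by
        rw [hE2val, hC3val, Real.mul_rpow hr.le hA_nn,
          Real.mul_rpow (by positivity) hC_nn, Real.mul_rpow hr.le hE_nn]
        have hx1 : ((r:ℝ)^2) ^ ((1:ℝ)/4) = r ^ ((1:ℝ)/2) := by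
          rw [← Real.rpow_natCast r 2, ← Real.rpow_mul hr.le]; norm_num
        have hx2 : r ^ ((13:ℝ)/8) = r ^ ((3:ℝ)/8) * (r ^ ((1:ℝ)/2) * r ^ ((3:ℝ)/4)) := by
          rw [← Real.rpow_add hr, ← Real.rpow_add hr]; norm_num
        rw [hx1, hx2]
        ring
end
end

section
/- Let a, b > 0 and let f : (0,1] → [0,∞) satisfy f(1) < ∞ and f(r) ≤ a (r/ρ)² f(ρ) + b (ρ/r)^{13/8} (1 + f(ρ)^{2/3}) for all 0 < r < ρ ≤ 1. Then sup_{0<r≤1} f(r) < ∞, with a bound depending only on a, b, and f(1). -/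
/-!
Fix a ratio `θ ∈ (0,1)` with `a θ² ≤ 1/2` and compare consecutive scales `θⁿ⁺¹ < θⁿ`. By Young's
inequality the sublinear term `C f(θⁿ)^{2/3}`, `C = b θ^{-13/8}`, is at most `f(θⁿ)/4 + 16 C³`, so
`f(θⁿ⁺¹) ≤ (3/4) f(θⁿ) + C + 16 C³`, and iterating from `f(1) ≤ K` bounds `f` on all the scales
`θⁿ`. Every other radius lies between two consecutive scales, where one more application of the
two-scale inequality gives the bound.
-/

open Set Real

lemma mul_sq_le_cube_div_four_add {C y : ℝ} (hC : 0 ≤ C) (hy : 0 ≤ y) :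
    C * y ^ 2 ≤ y ^ 3 / 4 + 16 * C ^ 3 := by
  rcases le_total (4 * C) y with h | h
  · nlinarith [mul_nonneg (sq_nonneg y) (sub_nonneg.2 h), pow_nonneg hC 3]
  · nlinarith [mul_le_mul_of_nonneg_left (pow_le_pow_left₀ hy h 2) hC]

lemma mul_rpow_two_thirds_le {C x : ℝ} (hC : 0 ≤ C) (hx : 0 ≤ x) :
    C * x ^ ((2 : ℝ) / 3) ≤ x / 4 + 16 * C ^ 3 := by
  have hcube : (x ^ ((1 : ℝ) / 3)) ^ 3 = x := by
    rw [← rpow_natCast, ← rpow_mul hx]; norm_num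
  have hsq : (x ^ ((1 : ℝ) / 3)) ^ 2 = x ^ ((2 : ℝ) / 3) := by
    rw [← rpow_natCast, ← rpow_mul hx]; norm_num
  simpa only [hsq, hcube] using mul_sq_le_cube_div_four_add hC (rpow_nonneg hx ((1 : ℝ) / 3))

lemma le_max_of_le_mul_add {u : ℕ → ℝ} {q c : ℝ} (hq₀ : 0 ≤ q) (hq₁ : q < 1)
    (hu : ∀ n, u (n + 1) ≤ q * u n + c) (n : ℕ) : u n ≤ max (u 0) (c / (1 - q)) := by
  set M := max (u 0) (c / (1 - q))
  have hcM : c ≤ (1 - q) * M := by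
    rw [← div_le_iff₀' (sub_pos.2 hq₁)]; exact le_max_right _ _
  induction n with
  | zero => exact le_max_left _ _
  | succ n ih => nlinarith [hu n, mul_le_mul_of_nonneg_left ih hq₀]

def TwoScaleIneq (a b : ℝ) (f : ℝ → ℝ) : Prop :=
  ∀ r ρ : ℝ, 0 < r → r < ρ → ρ ≤ 1 →
    f r ≤ a * (r / ρ) ^ 2 * f ρ + b * (ρ / r) ^ ((13 : ℝ) / 8) * (1 + f ρ ^ ((2 : ℝ) / 3))

namespace TwoScaleIneq

variable {a b θ K : ℝ} {f : ℝ → ℝ}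

lemma apply_pow_succ_le (hf : TwoScaleIneq a b f) (hb : 0 ≤ b) (hf₀ : ∀ r ∈ Ioc (0 : ℝ) 1, 0 ≤ f r)
    (hθ₀ : 0 < θ) (hθ₁ : θ < 1) (haθ : a * θ ^ 2 ≤ 1 / 2) (n : ℕ) :
    f (θ ^ (n + 1)) ≤
      3 / 4 * f (θ ^ n) + (b * θ⁻¹ ^ ((13 : ℝ) / 8) + 16 * (b * θ⁻¹ ^ ((13 : ℝ) / 8)) ^ 3) := by
  have hC : 0 ≤ b * θ⁻¹ ^ ((13 : ℝ) / 8) := mul_nonneg hb (rpow_nonneg (inv_nonneg.2 hθ₀.le) _)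
  have hθn : θ ^ n ≠ 0 := pow_ne_zero n hθ₀.ne'
  have hg : 0 ≤ f (θ ^ n) := hf₀ _ ⟨pow_pos hθ₀ n, pow_le_one₀ hθ₀.le hθ₁.le⟩
  have hstep := hf _ _ (pow_pos hθ₀ _) (pow_lt_pow_right_of_lt_one₀ hθ₀ hθ₁ n.lt_succ_self)
    (pow_le_one₀ hθ₀.le hθ₁.le)
  rw [pow_succ θ n, mul_div_cancel_left₀ θ hθn, div_mul_cancel_left₀ hθn, ← pow_succ] at hstep
  nlinarith [mul_le_mul_of_nonneg_right haθ hg, mul_rpow_two_thirds_le hC hg]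

lemma apply_pow_le (hf : TwoScaleIneq a b f) (hb : 0 ≤ b) (hf₀ : ∀ r ∈ Ioc (0 : ℝ) 1, 0 ≤ f r)
    (hfK : f 1 ≤ K) (hθ₀ : 0 < θ) (hθ₁ : θ < 1) (haθ : a * θ ^ 2 ≤ 1 / 2) (n : ℕ) :
    f (θ ^ n) ≤
      max K (4 * (b * θ⁻¹ ^ ((13 : ℝ) / 8) + 16 * (b * θ⁻¹ ^ ((13 : ℝ) / 8)) ^ 3)) := by
  calc f (θ ^ n) ≤ max (f (θ ^ 0))
        ((b * θ⁻¹ ^ ((13 : ℝ) / 8) + 16 * (b * θ⁻¹ ^ ((13 : ℝ) / 8)) ^ 3) / (1 - 3 / 4)) :=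
        le_max_of_le_mul_add (u := fun n ↦ f (θ ^ n)) (by norm_num) (by norm_num)
          (hf.apply_pow_succ_le hb hf₀ hθ₀ hθ₁ haθ) n
    _ = max (f 1) _ := by rw [pow_zero]; congr 1; ring
    _ ≤ _ := max_le_max_right _ hfK

lemma le_of_forall_apply_pow_le (hf : TwoScaleIneq a b f) (ha : 0 ≤ a) (hb : 0 ≤ b)
    (hf₀ : ∀ r ∈ Ioc (0 : ℝ) 1, 0 ≤ f r) (hθ₀ : 0 < θ) (hθ₁ : θ < 1) {B : ℝ}
    (hB : ∀ n : ℕ, f (θ ^ n) ≤ B) {r : ℝ} (hr : r ∈ Ioc (0 : ℝ) 1) :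
    f r ≤ max B (a * B + b * θ⁻¹ ^ ((13 : ℝ) / 8) * (1 + B ^ ((2 : ℝ) / 3))) := by
  obtain ⟨n, hn, hrn⟩ := exists_nat_pow_near_of_lt_one hr.1 hr.2 hθ₀ hθ₁
  rcases hrn.eq_or_lt with rfl | hrn
  · exact le_max_of_le_left (hB n)
  have hρ₀ : 0 < θ ^ n := pow_pos hθ₀ n
  have hg : 0 ≤ f (θ ^ n) := hf₀ _ ⟨hρ₀, pow_le_one₀ hθ₀.le hθ₁.le⟩
  have hratio : (r / θ ^ n) ^ 2 ≤ 1 :=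
    pow_le_one₀ (div_nonneg hr.1.le hρ₀.le) ((div_le_one hρ₀).2 hrn.le)
  have hratio' : θ ^ n / r ≤ θ⁻¹ := by
    rw [div_le_iff₀ hr.1, ← div_eq_inv_mul, le_div_iff₀ hθ₀, ← pow_succ]; exact hn.le
  calc f r ≤ a * (r / θ ^ n) ^ 2 * f (θ ^ n)
        + b * (θ ^ n / r) ^ ((13 : ℝ) / 8) * (1 + f (θ ^ n) ^ ((2 : ℝ) / 3)) :=
        hf _ _ hr.1 hrn (pow_le_one₀ hθ₀.le hθ₁.le)
    _ ≤ a * 1 * B + b * θ⁻¹ ^ ((13 : ℝ) / 8) * (1 + B ^ ((2 : ℝ) / 3)) := by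
        gcongr
        · exact hB n
        · exact div_nonneg hρ₀.le hr.1.le
        · exact hB n
    _ ≤ _ := by rw [mul_one]; exact le_max_right _ _

end TwoScaleIneq

/-- boundedness from a two-scale inequality with a sublinear term.
If `f : (0,1] → [0,∞)` satisfies `f(1) < ∞` and
`f(r) ≤ a (r/ρ)² f(ρ) + b (ρ/r)^{13/8} (1 + f(ρ)^{2/3})` for all `0 < r < ρ ≤ 1`,
then `sup_{0<r≤1} f(r) < ∞`, with a bound depending only on `a`, `b` and `f(1)`. -/
theorem boundedness_from_two_scale
    (a b K : ℝ) (ha : 0 < a) (hb : 0 < b) :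
    ∃ M : ℝ, ∀ (f : ℝ → ℝ),
      (∀ r ∈ Set.Ioc (0:ℝ) 1, 0 ≤ f r) →
      f 1 ≤ K →
      (∀ r ρ : ℝ, 0 < r → r < ρ → ρ ≤ 1 →
        f r ≤ a * (r/ρ)^2 * f ρ + b * (ρ/r) ^ ((13:ℝ)/8) * (1 + f ρ ^ ((2:ℝ)/3))) →
      ∀ r ∈ Set.Ioc (0:ℝ) 1, f r ≤ M := by
  set θ : ℝ := 1 / (2 * a + 2)
  have hθ₀ : 0 < θ := by positivity
  have hθ₁ : θ < 1 := by rw [div_lt_one (by positivity)]; linarith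
  have haθ : a * θ ^ 2 ≤ 1 / 2 := by
    have : a * θ ≤ 1 / 2 := by
      rw [← mul_div_assoc, mul_one, div_le_div_iff₀ (by positivity) two_pos]; linarith
    nlinarith [mul_le_mul_of_nonneg_left hθ₁.le (mul_nonneg ha.le hθ₀.le)]
  set C := b * θ⁻¹ ^ ((13 : ℝ) / 8)
  set B := max K (4 * (C + 16 * C ^ 3))
  exact ⟨max B (a * B + C * (1 + B ^ ((2 : ℝ) / 3))), fun f hf₀ hfK hf r hr ↦
    TwoScaleIneq.le_of_forall_apply_pow_le hf ha.le hb.le hf₀ hθ₀ hθ₁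
      (TwoScaleIneq.apply_pow_le hf hb.le hf₀ hfK hθ₀ hθ₁ haθ) hr⟩
end
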